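/- Let p be a positive rational with √p irrational, and let a₁, b₁, e, f be rationals with a₁ > 0, b₁ > 0, e ≥ 0, f > 0, a₁ − b₁√p < 0, and f·a₁ − e·b₁ ≥ 0 (i.e. e/f ≤ a₁/b₁). Then the rectangle of aspect ratio e + f√p can be tiled by finitely many rectangles all of aspect ratio a₁ + b₁√p. -/

import Mathlib

/-- A tiling of the rectangle `[0,1] × [0,r]` by finitely many closed
axis-parallel rectangles with positive side lengths, covering the rectangle
and having pairwise disjoint interiors. -/
structure RectTiling (r : ℝ) where
  m : ℕ
  px : Fin m → ℝ
  py : Fin m → ℝ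
  w : Fin m → ℝ
  h : Fin m → ℝ
  w_pos : ∀ k, 0 < w k
  h_pos : ∀ k, 0 < h k
  cover : (Set.Icc (0:ℝ) 1 ×ˢ Set.Icc (0:ℝ) r) =
      ⋃ k, Set.Icc (px k) (px k + w k) ×ˢ Set.Icc (py k) (py k + h k)
  disj : ∀ k l, k ≠ l →
      Disjoint ((Set.Ioo (px k) (px k + w k)) ×ˢ (Set.Ioo (py k) (py k + h k)))
               ((Set.Ioo (px l) (px l + w l)) ×ˢ (Set.Ioo (py l) (py l + h l)))

/-- Tile `k` of the tiling `T` has aspect ratio `x` (in one of the two orientations). -/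
def RectTiling.ratioOK {r : ℝ} (T : RectTiling r) (k : Fin T.m) (x : ℝ) : Prop :=
  T.h k / T.w k = x ∨ T.w k / T.h k = x

/-- The rectangle of aspect ratio `r` is tileable by rectangles with aspect
ratios among `X`. -/
def Tileable (r : ℝ) {n : ℕ} (X : Fin n → ℝ) : Prop :=
  ∃ T : RectTiling r, ∀ k, ∃ i, T.ratioOK k (X i)

/-- The rectangle of aspect ratio `r` admits a *diverse* tiling by rectangles
with aspect ratios `X 0, …, X (n-1)`: every tile has some ratio `X i`, and for
every `i` some tile has ratio `X i`. -/
def DiverselyTileable (r : ℝ) {n : ℕ} (X : Fin n → ℝ) : Prop :=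
  ∃ T : RectTiling r, (∀ k, ∃ i, T.ratioOK k (X i)) ∧ (∀ i, ∃ k, T.ratioOK k (X i))

/-! With `x = a₁ + b₁√p` and `x⁻¹ = (b₁√p - a₁) / (b₁²p - a₁²)`, one has
`e + f√p = q₁ x + q₂ x⁻¹` for the rationals `q₁ = (e b₁ + f a₁) / (2 a₁ b₁) > 0` and
`q₂ = (b₁²p - a₁²)(f a₁ - e b₁) / (2 a₁ b₁) ≥ 0`. The set of ratios `r > 0` for which the
`1 × r` rectangle can be tiled by `x`-rectangles contains `x`, is closed under addition
(stack two tilings) and under `r ↦ r⁻¹` (reflect in the diagonal and rescale), hence under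
multiplication by positive rationals; so it contains `q₁ x + q₂ x⁻¹`. -/

open Set

lemma preimage_swap_mul_prod {α : Type*} [Mul α] {r : α} (s t : Set α) :
    (fun z : α × α => (z.2 * r, z.1 * r)) ⁻¹' (s ×ˢ t) = ((· * r) ⁻¹' t) ×ˢ ((· * r) ⁻¹' s) :=
  ext fun _ => and_comm

lemma disjoint_prod_Ioo_of_le {α β : Type*} [Preorder β] {s t : Set α} {a b c d : β}
    (h : b ≤ c) : Disjoint (s ×ˢ Ioo a b) (t ×ˢ Ioo c d) :=
  disjoint_prod.2 <| Or.inr <| disjoint_left.2 fun _ hy hy' => (hy.2.trans_le h).not_gt hy'.1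

namespace RectTiling

variable {r r₁ r₂ x : ℝ}

lemma tile_subset (T : RectTiling r) (k : Fin T.m) :
    Icc (T.px k) (T.px k + T.w k) ×ˢ Icc (T.py k) (T.py k + T.h k) ⊆ Icc 0 1 ×ˢ Icc 0 r :=
  T.cover ▸ subset_iUnion
    (fun k => Icc (T.px k) (T.px k + T.w k) ×ˢ Icc (T.py k) (T.py k + T.h k)) k

lemma py_nonneg (T : RectTiling r) (k : Fin T.m) : 0 ≤ T.py k :=
  (T.tile_subset k <| mk_mem_prod (left_mem_Icc.2 (le_add_of_nonneg_right (T.w_pos k).le))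
    (left_mem_Icc.2 (le_add_of_nonneg_right (T.h_pos k).le))).2.1

lemma py_add_h_le (T : RectTiling r) (k : Fin T.m) : T.py k + T.h k ≤ r :=
  (T.tile_subset k <| mk_mem_prod (left_mem_Icc.2 (le_add_of_nonneg_right (T.w_pos k).le))
    (right_mem_Icc.2 (le_add_of_nonneg_right (T.h_pos k).le))).2.2

noncomputable def single (hr : 0 < r) : RectTiling r where
  m := 1
  px _ := 0
  py _ := 0
  w _ := 1
  h _ := r
  w_pos _ := one_pos
  h_pos _ := hr
  cover := by rw [iUnion_const, zero_add, zero_add]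
  disj k l hkl := absurd (Subsingleton.elim k l) hkl

lemma ratioOK_single (hr : 0 < r) (k : Fin 1) : (single hr).ratioOK k r :=
  Or.inl (div_one r)

noncomputable def transpose (T : RectTiling r) (hr : 0 < r) : RectTiling r⁻¹ where
  m := T.m
  px k := T.py k / r
  py k := T.px k / r
  w k := T.h k / r
  h k := T.w k / r
  w_pos k := div_pos (T.h_pos k) hr
  h_pos k := div_pos (T.w_pos k) hr
  cover := by
    have hrect : Icc (0 : ℝ) 1 ×ˢ Icc 0 r⁻¹ =
        (fun z : ℝ × ℝ => (z.2 * r, z.1 * r)) ⁻¹' (Icc 0 1 ×ˢ Icc 0 r) := by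
      rw [preimage_swap_mul_prod, preimage_mul_const_Icc₀ _ _ hr, preimage_mul_const_Icc₀ _ _ hr,
        zero_div, div_self hr.ne', one_div]
    simp only [hrect, T.cover, preimage_iUnion, preimage_swap_mul_prod,
      preimage_mul_const_Icc₀ _ _ hr, add_div]
  disj k l hkl := by
    have := (T.disj k l hkl).preimage fun z : ℝ × ℝ => (z.2 * r, z.1 * r)
    simpa only [preimage_swap_mul_prod, preimage_mul_const_Ioo₀ _ _ hr, add_div] using this

lemma ratioOK_transpose (T : RectTiling r) (hr : 0 < r) (k : Fin T.m) :
    (T.transpose hr).ratioOK k x ↔ T.ratioOK k x := by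
  simp only [ratioOK, transpose, div_div_div_cancel_right₀ hr.ne', or_comm]

noncomputable def stack (A : RectTiling r₁) (B : RectTiling r₂) (h₁ : 0 ≤ r₁) (h₂ : 0 ≤ r₂) :
    RectTiling (r₁ + r₂) where
  m := A.m + B.m
  px := Fin.append A.px B.px
  py := Fin.append A.py (B.py · + r₁)
  w := Fin.append A.w B.w
  h := Fin.append A.h B.h
  w_pos := Fin.addCases (by simpa using A.w_pos) (by simpa using B.w_pos)
  h_pos := Fin.addCases (by simpa using A.h_pos) (by simpa using B.h_pos)
  cover := by
    let ψ : ℝ × ℝ → ℝ × ℝ := Prod.map id (· - r₁)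
    have hψ : ∀ a b c d : ℝ, ψ ⁻¹' (Icc a b ×ˢ Icc c d) = Icc a b ×ˢ Icc (c + r₁) (d + r₁) :=
      fun a b c d => by rw [preimage_prod_map_prod, preimage_id, preimage_sub_const_Icc]
    have hrect : Icc (0 : ℝ) 1 ×ˢ Icc 0 (r₁ + r₂) =
        Icc 0 1 ×ˢ Icc 0 r₁ ∪ ψ ⁻¹' (Icc 0 1 ×ˢ Icc 0 r₂) := by
      rw [hψ, zero_add, add_comm r₂, ← prod_union, Icc_union_Icc_eq_Icc h₁ (by linarith)]
    rw [hrect, A.cover, B.cover, preimage_iUnion, ← finSumFinEquiv.surjective.iUnion_comp,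
      iUnion_sum]
    simp only [finSumFinEquiv_apply_left, finSumFinEquiv_apply_right, Fin.append_left,
      Fin.append_right, hψ, add_right_comm _ r₁]
  disj k l hkl := by
    induction k using Fin.addCases with
    | left i =>
      induction l using Fin.addCases with
      | left i' => simpa using A.disj i i' fun h => hkl (congrArg _ h)
      | right j' =>
        simp only [Fin.append_left, Fin.append_right]
        exact disjoint_prod_Ioo_of_le
          ((A.py_add_h_le i).trans (le_add_of_nonneg_left (B.py_nonneg j')))
    | right j =>
      induction l using Fin.addCases with
      | left i' =>
        simp only [Fin.append_left, Fin.append_right]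
        exact (disjoint_prod_Ioo_of_le
          ((A.py_add_h_le i').trans (le_add_of_nonneg_left (B.py_nonneg j)))).symm
      | right j' =>
        have := (B.disj j j' fun h => hkl (congrArg _ h)).preimage (Prod.map id (· - r₁))
        simpa only [preimage_prod_map_prod, preimage_id, preimage_sub_const_Ioo, Fin.append_right,
          add_right_comm _ r₁] using this

lemma ratioOK_stack_castAdd (A : RectTiling r₁) (B : RectTiling r₂) (h₁ : 0 ≤ r₁) (h₂ : 0 ≤ r₂)
    (i : Fin A.m) : (A.stack B h₁ h₂).ratioOK (Fin.castAdd B.m i) x ↔ A.ratioOK i x := by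
  simp only [ratioOK, stack, Fin.append_left]

lemma ratioOK_stack_natAdd (A : RectTiling r₁) (B : RectTiling r₂) (h₁ : 0 ≤ r₁) (h₂ : 0 ≤ r₂)
    (j : Fin B.m) : (A.stack B h₁ h₂).ratioOK (Fin.natAdd A.m j) x ↔ B.ratioOK j x := by
  simp only [ratioOK, stack, Fin.append_right]

end RectTiling

lemma tileable_self {x : ℝ} (hx : 0 < x) : Tileable x (fun _ : Fin 1 => x) :=
  ⟨.single hx, fun k => ⟨0, RectTiling.ratioOK_single hx k⟩⟩

namespace Tileable

variable {r r₁ r₂ : ℝ} {n : ℕ} {X : Fin n → ℝ}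

lemma add (h₁ : Tileable r₁ X) (h₂ : Tileable r₂ X) (hr₁ : 0 ≤ r₁) (hr₂ : 0 ≤ r₂) :
    Tileable (r₁ + r₂) X := by
  obtain ⟨A, hA⟩ := h₁
  obtain ⟨B, hB⟩ := h₂
  refine ⟨A.stack B hr₁ hr₂, Fin.addCases (fun i => ?_) (fun j => ?_)⟩
  · obtain ⟨l, hl⟩ := hA i
    exact ⟨l, (A.ratioOK_stack_castAdd B hr₁ hr₂ i).2 hl⟩
  · obtain ⟨l, hl⟩ := hB j
    exact ⟨l, (A.ratioOK_stack_natAdd B hr₁ hr₂ j).2 hl⟩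

lemma inv (h : Tileable r X) (hr : 0 < r) : Tileable r⁻¹ X := by
  obtain ⟨T, hT⟩ := h
  refine ⟨T.transpose hr, fun k => ?_⟩
  obtain ⟨l, hl⟩ := hT k
  exact ⟨l, (T.ratioOK_transpose hr k).2 hl⟩

lemma natCast_mul (h : Tileable r X) (hr : 0 ≤ r) {k : ℕ} (hk : 1 ≤ k) :
    Tileable (k * r) X := by
  induction k, hk using Nat.le_induction with
  | base => simpa using h
  | succ k _ ih =>
    rw [Nat.cast_succ, add_one_mul]
    exact ih.add h (by positivity) hr

/-- With `q = a / b`: `q * r = a * (b * r⁻¹)⁻¹`. -/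
lemma ratCast_mul (h : Tileable r X) (hr : 0 < r) {q : ℚ} (hq : 0 < q) :
    Tileable (q * r) X := by
  obtain ⟨a, ha⟩ := Int.eq_ofNat_of_zero_le (Rat.num_pos.2 hq).le
  have ha₁ : 1 ≤ a := by have := Rat.num_pos.2 hq; omega
  have hq : (q : ℝ) * r = a * ((q.den : ℝ) * r⁻¹)⁻¹ := by
    rw [Rat.cast_def, ha, mul_inv, inv_inv]
    push_cast
    ring
  rw [hq]
  exact (((h.inv hr).natCast_mul (by positivity) q.den_pos).inv (by positivity)).natCast_mul
    (by positivity) ha₁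

end Tileable

lemma tileable_rat_mul_add_rat_mul_inv {x : ℝ} (hx : 0 < x) {q₁ q₂ : ℚ} (hq₁ : 0 < q₁)
    (hq₂ : 0 ≤ q₂) : Tileable (q₁ * x + q₂ * x⁻¹) (fun _ : Fin 1 => x) := by
  have h₁ := (tileable_self hx).ratCast_mul hx hq₁
  rcases hq₂.eq_or_lt with rfl | hq₂
  · simpa using h₁
  · exact h₁.add (((tileable_self hx).inv hx).ratCast_mul (inv_pos.2 hx) hq₂) (by positivity)
      (by positivity)

lemma add_mul_eq_mul_add_mul_inv {a b e f s : ℝ} (ha : a ≠ 0) (hb : b ≠ 0) (hx : a + b * s ≠ 0) :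
    e + f * s = (e * b + f * a) / (2 * a * b) * (a + b * s) +
      (b ^ 2 * s ^ 2 - a ^ 2) * (f * a - e * b) / (2 * a * b) * (a + b * s)⁻¹ := by
  have hx' : a + s * b ≠ 0 := by rwa [mul_comm s]
  rw [show b ^ 2 * s ^ 2 - a ^ 2 = (b * s - a) * (a + b * s) by ring]
  field_simp
  ring

theorem tiling_single_ratio_explicit_general (p : ℚ) (hp : 0 < p)
    (a₁ b₁ e f : ℚ) (ha : 0 < a₁) (hb : 0 < b₁) (he : 0 ≤ e) (hf : 0 < f)
    (hconj : (a₁ : ℝ) - (b₁ : ℝ) * Real.sqrt p < 0)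
    (hfe : 0 ≤ f * a₁ - e * b₁) :
    Tileable ((e : ℝ) + (f : ℝ) * Real.sqrt p)
      (fun _ : Fin 1 => (a₁ : ℝ) + (b₁ : ℝ) * Real.sqrt p) := by
  have hsq : Real.sqrt p ^ 2 = p := Real.sq_sqrt (by positivity)
  have hx : 0 < (a₁ : ℝ) + b₁ * Real.sqrt p := by positivity
  have hdisc : 0 < b₁ ^ 2 * p - a₁ ^ 2 := by
    have : (a₁ : ℝ) ^ 2 < b₁ ^ 2 * p := by nlinarith
    exact_mod_cast sub_pos.2 this
  have hq₁ : 0 < (e * b₁ + f * a₁) / (2 * a₁ * b₁) := by positivity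
  have hq₂ : 0 ≤ (b₁ ^ 2 * p - a₁ ^ 2) * (f * a₁ - e * b₁) / (2 * a₁ * b₁) :=
    div_nonneg (mul_nonneg hdisc.le hfe) (by positivity)
  rw [add_mul_eq_mul_add_mul_inv (by positivity) (by positivity) hx.ne', hsq]
  exact_mod_cast tileable_rat_mul_add_rat_mul_inv hx hq₁ hq₂

theorem tiling_single_ratio_explicit (p : ℚ) (hp : 0 < p)
    (hirr : Irrational (Real.sqrt p))
    (a₁ b₁ e f : ℚ) (ha : 0 < a₁) (hb : 0 < b₁) (he : 0 ≤ e) (hf : 0 < f)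
    (hconj : (a₁ : ℝ) - (b₁ : ℝ) * Real.sqrt p < 0)
    (hfe : 0 ≤ f * a₁ - e * b₁) :
    Tileable ((e : ℝ) + (f : ℝ) * Real.sqrt p)
      (fun _ : Fin 1 => (a₁ : ℝ) + (b₁ : ℝ) * Real.sqrt p) :=
  tiling_single_ratio_explicit_general p hp a₁ b₁ e f ha hb he hf hconj hfe
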